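/- Let U ⊆ ℂ^n be a connected open set and let φ₁,…,φ_s be holomorphic functions on U. Suppose that φ₁,…,φ_l (for some l ≤ s) are algebraically independent over the field of rational functions (no nonzero polynomial P ∈ ℂ[z₁,…,z_n, X₁,…,X_l] satisfies P(z, φ₁(z),…,φ_l(z)) ≡ 0 on U), and that for every j = 1,…,s there exists a nonzero polynomial Q_j ∈ ℂ[z₁,…,z_n, X₁,…,X_l, Y] with Q_j(z, φ₁(z),…,φ_l(z), φ_j(z)) = 0 for all z ∈ U. Then there exist a nonempty connected open subset U' ⊆ U, an open neighborhood Û of the graph {(z, φ₁(z),…,φ_l(z)) : z ∈ U'} in ℂ^n × ℂ^l, and holomorphic Nash algebraic functions φ̂₁,…,φ̂_s on Û such that φ_j(z) = φ̂_j(z, φ₁(z),…,φ_l(z)) for all z ∈ U' and all j = 1,…,s. -/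

import Mathlib

/-!
Choose for each `φⱼ` an annihilating polynomial `Qⱼ(z, X, Y)` whose `Y`-derivative does not
vanish identically along the graph of `(φ₁, …, φ_l, φⱼ)`: if it did, `∂_Y Qⱼ` would be a nonzero
annihilator of lower degree, and degree `0` is excluded by the algebraic independence of
`φ₁, …, φ_l`. By the identity theorem on the connected set `U`, there is a point `z₀` at which
none of these finitely many derivatives vanishes. There the holomorphic implicit function
theorem solves `Qⱼ(z, X, Y) = 0` for `Y` near `(z₀, φ(z₀), φⱼ(z₀))`; the solution is Nash
algebraic, being annihilated by `Qⱼ`, and by uniqueness of the solution it recovers `φⱼ` near `z₀`.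
-/

open Filter Topology Complex

/-- A holomorphic function `H` on `Û ⊆ ℂ^n × ℂ^l` is Nash algebraic if it satisfies a
nontrivial polynomial equation `P(z, X, H(z,X)) = 0` on `Û`. -/
def NashAlgebraicOn2 {n l : ℕ} (H : (Fin n → ℂ) × (Fin l → ℂ) → ℂ)
    (Uhat : Set ((Fin n → ℂ) × (Fin l → ℂ))) : Prop :=
  DifferentiableOn ℂ H Uhat ∧
    ∃ P : Polynomial (MvPolynomial (Fin n ⊕ Fin l) ℂ), P ≠ 0 ∧
      ∀ zX ∈ Uhat,
        Polynomial.eval₂ (MvPolynomial.eval (Sum.elim zX.1 zX.2)) (H zX) P = 0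

open Set Polynomial

section IdentityTheorem

variable {E : Type*} [NormedAddCommGroup E] [NormedSpace ℂ E]

theorem Convex.eqOn_zero_of_eventuallyEq_zero {f : E → ℂ} {C : Set E} (hC : Convex ℝ C)
    (hCo : IsOpen C) (hf : DifferentiableOn ℂ f C) {w : E} (hw : w ∈ C)
    (h0 : f =ᶠ[𝓝 w] 0) : EqOn f 0 C := by
  intro y hy
  -- pass to the complex line through `w` and `y`, on which holomorphic functions are analytic
  set line : ℂ → E := fun t => t • (y - w) + w
  have hline : Differentiable ℂ line := by fun_prop
  have hg : AnalyticOnNhd ℂ (f ∘ line) (line ⁻¹' C) :=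
    (hf.comp hline.differentiableOn (mapsTo_preimage _ _)).analyticOnNhd
      (hCo.preimage hline.continuous)
  have hseg : Complex.ofReal '' Icc 0 1 ⊆ line ⁻¹' C := by
    rintro _ ⟨t, ht, rfl⟩
    have := hC.segment_subset hw hy (segment_eq_image_lineMap ℝ w y ▸ mem_image_of_mem _ ht)
    simpa [line, AffineMap.lineMap_apply_module', Complex.coe_smul] using this
  have h0' : f ∘ line =ᶠ[𝓝 0] 0 := by
    have : Tendsto line (𝓝 0) (𝓝 w) := by simpa [line] using hline.continuous.tendsto 0
    exact this.eventually h0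
  have := (hg.mono hseg).eqOn_zero_of_preconnected_of_eventuallyEq_zero
    (isPreconnected_Icc.image _ Complex.continuous_ofReal.continuousOn) ⟨0, by simp, rfl⟩ h0'
  simpa [line] using this ⟨1, by simp, rfl⟩

variable {U : Set E}

theorem IsPreconnected.eqOn_zero_of_eventuallyEq_zero {f : E → ℂ} (hUc : IsPreconnected U)
    (hU : IsOpen U) (hf : DifferentiableOn ℂ f U) {w : E} (hw : w ∈ U) (h0 : f =ᶠ[𝓝 w] 0) :
    EqOn f 0 U := by
  have hUsub : U ⊆ {z | f =ᶠ[𝓝 z] 0} := by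
    refine hUc.subset_of_closure_inter_subset isOpen_setOfPred_eventually_nhds ⟨w, hw, h0⟩ ?_
    rintro z ⟨hz, hzU⟩
    obtain ⟨r, hr, hball⟩ := Metric.isOpen_iff.1 hU z hzU
    obtain ⟨b, hb, hb0⟩ := mem_closure_iff.1 hz _ Metric.isOpen_ball (Metric.mem_ball_self hr)
    exact eventually_of_mem (Metric.ball_mem_nhds z hr)
      ((convex_ball z r).eqOn_zero_of_eventuallyEq_zero Metric.isOpen_ball (hf.mono hball) hb hb0)
  exact fun z hz => (hUsub hz).self_of_nhds

theorem IsPreconnected.exists_mem_ne_zero_of_isOpen {f : E → ℂ} (hUc : IsPreconnected U)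
    (hU : IsOpen U) (hf : DifferentiableOn ℂ f U) (hne : ∃ z ∈ U, f z ≠ 0) {V : Set E}
    (hV : IsOpen V) (hVne : V.Nonempty) (hVU : V ⊆ U) : ∃ z ∈ V, f z ≠ 0 := by
  by_contra! hV0
  obtain ⟨v, hv⟩ := hVne
  obtain ⟨z, hz, hfz⟩ := hne
  exact hfz (hUc.eqOn_zero_of_eventuallyEq_zero hU hf (hVU hv)
    (eventually_of_mem (hV.mem_nhds hv) hV0) hz)

theorem IsConnected.exists_forall_ne_zero {ι : Type*} [Finite ι] {f : ι → E → ℂ}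
    (hUc : IsConnected U) (hU : IsOpen U) (hf : ∀ i, DifferentiableOn ℂ (f i) U)
    (hne : ∀ i, ∃ z ∈ U, f i z ≠ 0) : ∃ z ∈ U, ∀ i, f i z ≠ 0 := by
  classical
  cases nonempty_fintype ι
  suffices ∀ (t : Finset ι) (V : Set E), IsOpen V → V.Nonempty → V ⊆ U →
      ∃ z ∈ V, ∀ i ∈ t, f i z ≠ 0 by
    obtain ⟨z, hz, hfz⟩ := this Finset.univ U hU hUc.nonempty le_rfl
    exact ⟨z, hz, fun i => hfz i (Finset.mem_univ i)⟩
  intro t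
  induction t using Finset.induction_on with
  | empty => exact fun V _ ⟨z, hz⟩ _ => ⟨z, hz, by simp⟩
  | insert i t _ ih =>
    intro V hV hVne hVU
    obtain ⟨z, hzV, hz⟩ :=
      hUc.isPreconnected.exists_mem_ne_zero_of_isOpen hU (hf i) (hne i) hV hVne hVU
    have hW : IsOpen (V ∩ f i ⁻¹' {0}ᶜ) :=
      ((hf i).mono hVU).continuousOn.isOpen_inter_preimage hV isOpen_compl_singleton
    obtain ⟨z', ⟨hz'V, hz'⟩, hz't⟩ := ih _ hW ⟨z, hzV, hz⟩ (inter_subset_left.trans hVU)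
    exact ⟨z', hz'V, Finset.forall_mem_insert _ _ _ |>.2 ⟨hz', hz't⟩⟩

end IdentityTheorem

theorem exists_annihilator_derivative_ne_zero {K σ X : Type*} [Field K] [CharZero K]
    {s : Set X} (x : X → σ → K) (y : X → K)
    (hindep : ∀ P : MvPolynomial σ K, (∀ z ∈ s, MvPolynomial.eval (x z) P = 0) → P = 0)
    (Q : (MvPolynomial σ K)[X]) (hQ : Q ≠ 0)
    (hQs : ∀ z ∈ s, Q.eval₂ (MvPolynomial.eval (x z)) (y z) = 0) :
    ∃ R : (MvPolynomial σ K)[X], R ≠ 0 ∧ (∀ z ∈ s, R.eval₂ (MvPolynomial.eval (x z)) (y z) = 0) ∧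
      ∃ z ∈ s, (derivative R).eval₂ (MvPolynomial.eval (x z)) (y z) ≠ 0 := by
  induction hd : Q.natDegree using Nat.strong_induction_on generalizing Q with
  | _ d ih =>
  by_cases hQ' : ∃ z ∈ s, (derivative Q).eval₂ (MvPolynomial.eval (x z)) (y z) ≠ 0
  · exact ⟨Q, hQ, hQs, hQ'⟩
  push Not at hQ'
  have hd0 : Q.natDegree ≠ 0 := by
    intro h0
    rw [eq_C_of_natDegree_eq_zero h0] at hQ hQs
    exact hQ (by simpa using hindep _ (by simpa using hQs))
  exact ih _ (hd ▸ natDegree_derivative_lt hd0) _ (mt derivative_eq_zero.1 hd0) hQ' rfl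

theorem Polynomial.hasDerivAt_eval₂ {𝕜 R : Type*} [NontriviallyNormedField 𝕜] [CommSemiring R]
    (f : R →+* 𝕜) (Q : R[X]) (y : 𝕜) :
    HasDerivAt (fun y => Q.eval₂ f y) ((derivative Q).eval₂ f y) y := by
  simpa only [eval₂_eq_eval_map, derivative_map] using (Q.map f).hasDerivAt y

theorem AnalyticAt.eval₂_mvPolynomialEval {𝕜 E σ : Type*} [NontriviallyNormedField 𝕜]
    [NormedAddCommGroup E] [NormedSpace 𝕜 E] (Q : (MvPolynomial σ 𝕜)[X]) {c : E → σ → 𝕜}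
    {g : E → 𝕜} {x : E} (hc : ∀ i, AnalyticAt 𝕜 (c · i) x) (hg : AnalyticAt 𝕜 g x) :
    AnalyticAt 𝕜 (fun x => Q.eval₂ (MvPolynomial.eval (c x)) (g x)) x := by
  simp_rw [eval₂_eq_sum_range]
  refine Finset.analyticAt_fun_sum _ fun i _ => ?_
  have hcoeff : AnalyticAt 𝕜 (fun x => MvPolynomial.eval (c x) (Q.coeff i)) x := by
    simpa using AnalyticAt.aeval_mvPolynomial hc (Q.coeff i)
  exact hcoeff.mul (hg.pow i)

theorem analyticAt_eval₂_sumElim {𝕜 ι κ : Type*} [NontriviallyNormedField 𝕜] [Fintype ι]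
    [Fintype κ] (Q : (MvPolynomial (ι ⊕ κ) 𝕜)[X]) (v : ((ι → 𝕜) × (κ → 𝕜)) × 𝕜) :
    AnalyticAt 𝕜 (fun v : ((ι → 𝕜) × (κ → 𝕜)) × 𝕜 =>
      Q.eval₂ (MvPolynomial.eval (Sum.elim v.1.1 v.1.2)) v.2) v := by
  refine AnalyticAt.eval₂_mvPolynomialEval Q ?_ analyticAt_snd
  rintro (i | i)
  · exact analyticAt_pi_iff.1 (analyticAt_fst.comp analyticAt_fst) i
  · exact analyticAt_pi_iff.1 (analyticAt_snd.comp analyticAt_fst) i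

theorem exists_implicitFunction_of_deriv_ne_zero {𝕜 E : Type*} [RCLike 𝕜]
    [NormedAddCommGroup E] [NormedSpace 𝕜 E] [CompleteSpace E] {F : E × 𝕜 → 𝕜} {u : E × 𝕜}
    (hF : ContDiffAt 𝕜 1 F u) (hFu : F u = 0) (hF' : deriv (fun y => F (u.1, y)) u.2 ≠ 0) :
    ∃ ψ : E → 𝕜, (∀ᶠ w in 𝓝 u.1, DifferentiableAt 𝕜 ψ w ∧ F (w, ψ w) = 0) ∧
      ∀ᶠ v in 𝓝 u, F v = 0 → ψ v.1 = v.2 := by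
  have hderiv : HasDerivAt (fun y => F (u.1, y)) ((fderiv 𝕜 F u ∘L .inr 𝕜 E 𝕜) 1) u.2 :=
    (hF.differentiableAt one_ne_zero).hasFDerivAt.comp_hasDerivAt u.2
      ((hasDerivAt_const u.2 u.1).prodMk (hasDerivAt_id u.2))
  have hinv : (fderiv 𝕜 F u ∘L .inr 𝕜 E 𝕜).IsInvertible :=
    ⟨ContinuousLinearEquiv.unitsEquivAut 𝕜 (Units.mk0 _ hF'),
      ContinuousLinearMap.ext_ring (by simp [hderiv.deriv])⟩
  refine ⟨hF.implicitFunction one_ne_zero hinv, ?_,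
    (hF.eventually_apply_eq_iff_implicitFunction one_ne_zero hinv).mono fun v hv => hFu ▸ hv.1⟩
  filter_upwards [(hF.contDiffAt_implicitFunction one_ne_zero hinv).eventually (by simp),
    hF.eventually_apply_implicitFunction one_ne_zero hinv] with w hψ hFψ
  exact ⟨hψ.differentiableAt one_ne_zero, hFu ▸ hFψ⟩

theorem exists_eval₂_sumElim_implicitFunction {𝕜 ι κ : Type*} [RCLike 𝕜] [Fintype ι] [Fintype κ]
    (Q : (MvPolynomial (ι ⊕ κ) 𝕜)[X]) {w₀ : (ι → 𝕜) × (κ → 𝕜)} {y₀ : 𝕜}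
    (h₀ : Q.eval₂ (MvPolynomial.eval (Sum.elim w₀.1 w₀.2)) y₀ = 0)
    (h₀' : (derivative Q).eval₂ (MvPolynomial.eval (Sum.elim w₀.1 w₀.2)) y₀ ≠ 0) :
    ∃ ψ : (ι → 𝕜) × (κ → 𝕜) → 𝕜,
      (∀ᶠ w in 𝓝 w₀, DifferentiableAt 𝕜 ψ w ∧
        Q.eval₂ (MvPolynomial.eval (Sum.elim w.1 w.2)) (ψ w) = 0) ∧
      ∀ᶠ v in 𝓝 (w₀, y₀), Q.eval₂ (MvPolynomial.eval (Sum.elim v.1.1 v.1.2)) v.2 = 0 →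
        ψ v.1 = v.2 := by
  have hQ := (analyticAt_eval₂_sumElim Q (w₀, y₀)).contDiffAt (n := 1)
  have hQ' := (hasDerivAt_eval₂ (MvPolynomial.eval (Sum.elim w₀.1 w₀.2)) Q y₀).deriv
  exact exists_implicitFunction_of_deriv_ne_zero hQ h₀ (hQ'.trans_ne h₀')

/-- Holomorphic functions which are algebraic over a maximal algebraically independent
subfamily `φ₁,…,φ_l` can be represented, on a smaller open set, as Nash algebraic
functions of `(z, φ₁(z),…,φ_l(z))`. -/
theorem stmt12 {n s l : ℕ} (hl : l ≤ s)
    (U : Set (Fin n → ℂ)) (hUopen : IsOpen U) (hUconn : IsConnected U)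
    (φ : Fin s → (Fin n → ℂ) → ℂ) (hφ : ∀ j, DifferentiableOn ℂ (φ j) U)
    (hindep : ¬ ∃ P : MvPolynomial (Fin n ⊕ Fin l) ℂ, P ≠ 0 ∧
      ∀ z ∈ U, MvPolynomial.eval
        (Sum.elim z (fun i : Fin l => φ (Fin.castLE hl i) z)) P = 0)
    (halg : ∀ j : Fin s, ∃ Q : Polynomial (MvPolynomial (Fin n ⊕ Fin l) ℂ), Q ≠ 0 ∧
      ∀ z ∈ U, Polynomial.eval₂
        (MvPolynomial.eval (Sum.elim z (fun i : Fin l => φ (Fin.castLE hl i) z)))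
        (φ j z) Q = 0) :
    ∃ (U' : Set (Fin n → ℂ)) (Uhat : Set ((Fin n → ℂ) × (Fin l → ℂ)))
      (φhat : Fin s → (Fin n → ℂ) × (Fin l → ℂ) → ℂ),
      U'.Nonempty ∧ IsOpen U' ∧ IsConnected U' ∧ U' ⊆ U ∧
      IsOpen Uhat ∧
      (∀ z ∈ U', (z, fun i : Fin l => φ (Fin.castLE hl i) z) ∈ Uhat) ∧
      (∀ j, NashAlgebraicOn2 (φhat j) Uhat) ∧
      (∀ j, ∀ z ∈ U',
        φ j z = φhat j (z, fun i : Fin l => φ (Fin.castLE hl i) z)) := by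
  set Φ : (Fin n → ℂ) → Fin l → ℂ := fun z i => φ (Fin.castLE hl i) z
  have hgraph : DifferentiableOn ℂ (fun z => (z, Φ z)) U :=
    differentiableOn_id.prodMk (differentiableOn_pi.2 fun i => hφ _)
  have hγ : ∀ j, DifferentiableOn ℂ (fun z => ((z, Φ z), φ j z)) U :=
    fun j => hgraph.prodMk (hφ j)
  choose Q hQ0 hQ hQ' using fun j => (halg j).elim fun Q₀ ⟨hQ₀, hQ₀U⟩ =>
    exists_annihilator_derivative_ne_zero (s := U) (fun z => Sum.elim z (Φ z)) (φ j)
      (fun P hP => by_contra fun hP0 => hindep ⟨P, hP0, hP⟩) Q₀ hQ₀ hQ₀U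
  have hQ'_diff : ∀ j, DifferentiableOn ℂ
      (fun z => (derivative (Q j)).eval₂ (MvPolynomial.eval (Sum.elim z (Φ z))) (φ j z)) U :=
    fun j z hz => ((analyticAt_eval₂_sumElim (derivative (Q j)) _).differentiableAt
      |>.comp_differentiableWithinAt z (hγ j z hz) :)
  obtain ⟨z₀, hz₀U, hz₀⟩ := hUconn.exists_forall_ne_zero hUopen hQ'_diff hQ'
  choose ψ hψ hψ_uniq using fun j =>
    exists_eval₂_sumElim_implicitFunction (Q j) (w₀ := (z₀, Φ z₀)) (hQ j z₀ hz₀U) (hz₀ j)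
  obtain ⟨Uhat, hUhat, hUhat_open, hz₀Uhat⟩ := eventually_nhds_iff.1 (eventually_all.2 hψ)
  have hnear : ∀ᶠ z in 𝓝 z₀, z ∈ U ∧ (z, Φ z) ∈ Uhat ∧ ∀ j, φ j z = ψ j (z, Φ z) := by
    have hU := hUopen.mem_nhds hz₀U
    filter_upwards [hU,
      (hgraph.continuousOn.continuousAt hU).eventually (hUhat_open.mem_nhds hz₀Uhat),
      eventually_all.2 fun j => ((hγ j).continuousOn.continuousAt hU).eventually (hψ_uniq j)]
      with z hzU hzUhat hzψ
    exact ⟨hzU, hzUhat, fun j => (hzψ j (hQ j z hzU)).symm⟩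
  obtain ⟨r, hr, hball⟩ := Metric.eventually_nhds_iff_ball.1 hnear
  have hz₀r : z₀ ∈ Metric.ball z₀ r := Metric.mem_ball_self hr
  refine ⟨Metric.ball z₀ r, Uhat, ψ, ⟨z₀, hz₀r⟩, Metric.isOpen_ball,
    (convex_ball z₀ r).isConnected ⟨z₀, hz₀r⟩, fun z hz => (hball z hz).1, hUhat_open,
    fun z hz => (hball z hz).2.1, fun j => ⟨fun w hw => (hUhat w hw j).1.differentiableWithinAt,
      Q j, hQ0 j, fun w hw => (hUhat w hw j).2⟩, fun j z hz => (hball z hz).2.2 j⟩
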